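/- Fix an integer t ≥ 2 and positive integers r, s both divisible by t, and set n = (r+s)/t. Then the coefficient of x^r in the polynomial (1 + x + x^2 + ... + x^n)^t equals Σ_{j=0}^{⌊r/(n+1)⌋} (−1)^j C(t,j) C(r − (n+1)j + t − 1, t−1); equivalently, the number of t-cores in Par_{r,s} is given by this alternating sum. -/

import Mathlib

open Finset

/-- Partitions in the `r × s` rectangle: weakly decreasing `r`-tuples with parts at most `s`. -/
def IsRectPartition (r s : ℕ) (lam : Fin r → ℕ) : Prop :=
  (∀ i j : Fin r, i ≤ j → lam j ≤ lam i) ∧ ∀ i, lam i ≤ s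

/-- The beta-set `β(λ) = {λ_i + r − i : 1 ≤ i ≤ r}` (with 0-indexed `i`). -/
def betaSet (r : ℕ) (lam : Fin r → ℕ) : Finset ℕ :=
  Finset.image (fun i : Fin r => lam i + (r - 1 - (i : ℕ))) Finset.univ

/-- `λ` is a `t`-core: for every `b ∈ β(λ)` with `b ≥ t`, also `b − t ∈ β(λ)`. -/
def IsTCore (r t : ℕ) (lam : Fin r → ℕ) : Prop :=
  ∀ b ∈ betaSet r lam, t ≤ b → b - t ∈ betaSet r lam

/-- `n_i = ⌊(r+s+t−1−i)/t⌋`. -/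
def nres (r s t i : ℕ) : ℕ := (r + s + t - 1 - i) / t

/-- `a_i(λ) = #{b ∈ β(λ) : b ≡ i (mod t)}`. -/
def aCount (r t : ℕ) (lam : Fin r → ℕ) (i : ℕ) : ℕ :=
  ((betaSet r lam).filter fun b => b % t = i).card

/-- The justification `J(λ)`: in each residue class `i` mod `t`, the `a_i(λ)` smallest
nonnegative integers congruent to `i`. -/
def justification (r t : ℕ) (lam : Fin r → ℕ) : Finset ℕ :=
  (Finset.range t).biUnion fun i =>
    (Finset.range (aCount r t lam i)).image fun m => i + m * t

/-- The size of the `t`-core of `λ`: `Σ_{b ∈ J(λ)} b − r(r−1)/2`. -/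
def coreSize (r t : ℕ) (lam : Fin r → ℕ) : ℕ :=
  (∑ b ∈ justification r t lam, b) - r * (r - 1) / 2

/-!
The beta-set map is a bijection from the partitions in the `r × s` rectangle onto the `r`-subsets
of `{0, …, r + s - 1}`, and `λ` is a `t`-core exactly when its beta-set is closed under
`b ↦ b - t`. As `r + s = t n`, each residue class mod `t` has `n` elements below `r + s`, and a
closed set meets it in an initial segment. So `t`-cores correspond to the tuples
`(a_0, …, a_{t-1})` with `0 ≤ a_i ≤ n` and `∑ a_i = r`, which the coefficient of `x^r` in
`(1 + x + ⋯ + x^n)^t` counts. Writing this polynomial as `(1 - x^{n+1})^t (1 - x)^{-t}` and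
expanding both factors gives the alternating sum.
-/

lemma Fin.apply_add_sub_le_of_strictMono {r : ℕ} {f : Fin r → ℕ} (hf : StrictMono f)
    {a b : Fin r} (hab : a ≤ b) : f a + ((b : ℕ) - a) ≤ f b := by
  have hcard := card_le_card_of_injOn f (s := Icc a b) (t := Icc (f a) (f b))
    (fun x hx => by
      simp only [coe_Icc, Set.mem_Icc] at hx ⊢
      exact ⟨hf.monotone hx.1, hf.monotone hx.2⟩)
    hf.injective.injOn
  rw [Fin.card_Icc, Nat.card_Icc] at hcard
  have := hf.monotone hab
  omega

section BetaSet

variable {r s : ℕ}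

def betaSeq (lam : Fin r → ℕ) (j : Fin r) : ℕ := lam j.rev + j

lemma betaSet_eq_image_betaSeq (lam : Fin r → ℕ) :
    betaSet r lam = univ.image (betaSeq lam) := by
  have hrev : (fun i : Fin r => lam i + (r - 1 - i)) = betaSeq lam ∘ Fin.rev := by
    funext i
    simp only [Function.comp_apply, betaSeq, Fin.rev_rev, Fin.val_rev]
    omega
  rw [betaSet, hrev, ← image_image, image_univ_of_surjective Fin.rev_surjective]

lemma strictMono_betaSeq {lam : Fin r → ℕ} (h : Antitone lam) : StrictMono (betaSeq lam) := by
  intro a b hab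
  have := h (Fin.rev_le_rev.mpr hab.le)
  have : (a : ℕ) < b := hab
  simp only [betaSeq]
  omega

lemma card_betaSet {lam : Fin r → ℕ} (h : Antitone lam) : #(betaSet r lam) = r := by
  rw [betaSet_eq_image_betaSeq, card_image_of_injective _ (strictMono_betaSeq h).injective,
    card_univ, Fintype.card_fin]

lemma betaSet_subset_range {lam : Fin r → ℕ} (h : ∀ i, lam i ≤ s) :
    betaSet r lam ⊆ range (r + s) := by
  intro b hb
  obtain ⟨i, -, rfl⟩ := mem_image.mp hb
  have := h i
  rw [mem_range]
  omega

lemma betaSet_injOn : Set.InjOn (betaSet r) {lam | Antitone lam} := by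
  intro lam hlam mu hmu heq
  have hseq : betaSeq lam = betaSeq mu := by
    rw [← (strictMono_betaSeq hlam).range_inj (strictMono_betaSeq hmu)]
    simpa [betaSet_eq_image_betaSeq] using congrArg ((↑) : Finset ℕ → Set ℕ) heq
  funext i
  have := congrFun hseq i.rev
  simpa [betaSeq] using this

lemma exists_betaSet_eq {B : Finset ℕ} (hB : B ⊆ range (r + s)) (hcard : #B = r) :
    ∃ lam, IsRectPartition r s lam ∧ betaSet r lam = B := by
  set e := B.orderEmbOfFin hcard
  have he : StrictMono e := e.strictMono
  have hle (j : Fin r) : (j : ℕ) ≤ e j := by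
    have := Fin.apply_add_sub_le_of_strictMono he
      (Fin.le_def.mpr (Nat.zero_le j) : ⟨0, j.pos⟩ ≤ j)
    simp only [Nat.sub_zero] at this
    omega
  refine ⟨fun i => e i.rev - i.rev, ⟨fun i j hij => ?_, fun i => ?_⟩, ?_⟩
  · have := Fin.apply_add_sub_le_of_strictMono he (Fin.rev_le_rev.mpr hij)
    have := hle i.rev
    dsimp only
    omega
  · set last : Fin r := ⟨r - 1, Nat.sub_one_lt_of_lt i.pos⟩
    have hlast : (last : ℕ) = r - 1 := rfl
    have := Fin.apply_add_sub_le_of_strictMono he (Fin.le_def.mpr (by omega) : i.rev ≤ last)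
    have : e last < r + s := mem_range.mp (hB (B.orderEmbOfFin_mem hcard last))
    dsimp only
    omega
  · have hseq : betaSeq (fun i => e i.rev - i.rev) = e := by
      funext j
      simp only [betaSeq, Fin.rev_rev]
      have := hle j
      omega
    rw [betaSet_eq_image_betaSeq, hseq, image_orderEmbOfFin_univ]

end BetaSet

def IsClosedUnderSub (t : ℕ) (B : Finset ℕ) : Prop := ∀ b ∈ B, t ≤ b → b - t ∈ B

instance (t : ℕ) : DecidablePred (IsClosedUnderSub t) := fun _ => by
  unfold IsClosedUnderSub
  infer_instance

lemma ncard_rectPartition_tCore (r s t : ℕ) :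
    {lam : Fin r → ℕ | IsRectPartition r s lam ∧ IsTCore r t lam}.ncard =
      #{B ∈ powersetCard r (range (r + s)) | IsClosedUnderSub t B} := by
  rw [← Set.ncard_coe_finset]
  refine Set.ncard_congr (fun lam _ => betaSet r lam) ?_ ?_ ?_
  · rintro lam ⟨⟨hanti, hle⟩, hcore⟩
    simp only [coe_filter, mem_powersetCard, Set.mem_ofPred_eq]
    exact ⟨⟨betaSet_subset_range hle, card_betaSet hanti⟩, hcore⟩
  · rintro lam mu ⟨⟨hlam, -⟩, -⟩ ⟨⟨hmu, -⟩, -⟩ heq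
    exact betaSet_injOn hlam hmu heq
  · intro B hB
    simp only [coe_filter, mem_powersetCard, Set.mem_ofPred_eq] at hB
    obtain ⟨⟨hsub, hcard⟩, hclosed⟩ := hB
    obtain ⟨lam, hlam, rfl⟩ := exists_betaSet_eq hsub hcard
    exact ⟨lam, ⟨hlam, hclosed⟩, rfl⟩

section Residues

variable {t : ℕ}

lemma add_mul_mod_of_lt {i : ℕ} (hi : i < t) (m : ℕ) : (i + t * m) % t = i := by
  rw [Nat.add_mul_mod_self_left, Nat.mod_eq_of_lt hi]

lemma add_mul_div_of_lt {i : ℕ} (hi : i < t) (m : ℕ) : (i + t * m) / t = m := by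
  rw [Nat.add_mul_div_left _ _ (by omega), Nat.div_eq_of_lt hi, zero_add]

lemma injective_add_mul (ht : 0 < t) (i : ℕ) : Function.Injective fun m => i + t * m :=
  (add_right_injective i).comp (mul_right_injective₀ ht.ne')

def residueCount (t : ℕ) (B : Finset ℕ) (i : ℕ) : ℕ := #{b ∈ B | b % t = i}

def residuePrefixes (t : ℕ) (f : Fin t → ℕ) : Finset ℕ :=
  univ.biUnion fun i => (range (f i)).image fun m => i + t * m

lemma IsClosedUnderSub.sub_mul_mem {B : Finset ℕ} (hB : IsClosedUnderSub t B) {b : ℕ}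
    (hb : b ∈ B) (k : ℕ) (hk : t * k ≤ b) : b - t * k ∈ B := by
  induction k with
  | zero => simpa using hb
  | succ k ih =>
    have := hB _ (ih (by nlinarith)) (by rw [Nat.mul_succ] at hk; omega)
    rwa [Nat.sub_sub, ← Nat.mul_succ] at this

lemma IsClosedUnderSub.div_lt_residueCount (ht : 0 < t) {B : Finset ℕ}
    (hB : IsClosedUnderSub t B) {b : ℕ} (hb : b ∈ B) : b / t < residueCount t B (b % t) := by
  have hdiv := Nat.mod_add_div b t
  suffices h : (range (b / t + 1)).image (fun m => b % t + t * m) ⊆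
      B.filter (fun x => x % t = b % t) by
    have := card_le_card h
    rwa [card_image_of_injective _ (injective_add_mul ht _),
      card_range] at this
  intro x hx
  obtain ⟨m, hm, rfl⟩ := mem_image.mp hx
  have hmul : t * m ≤ t * (b / t) := Nat.mul_le_mul_left t (Nat.lt_succ_iff.mp (mem_range.mp hm))
  have := hB.sub_mul_mem hb (b / t - m) (by rw [Nat.mul_sub]; omega)
  rw [Nat.mul_sub, show b - (t * (b / t) - t * m) = b % t + t * m by omega] at this
  exact mem_filter.mpr ⟨this, add_mul_mod_of_lt (Nat.mod_lt b ht) m⟩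

lemma IsClosedUnderSub.residueCount_le_div {B : Finset ℕ} (hB : IsClosedUnderSub t B) {b : ℕ}
    (hb : b ∉ B) :
    residueCount t B (b % t) ≤ b / t := by
  have hdiv := Nat.mod_add_div b t
  suffices h : B.filter (fun x => x % t = b % t) ⊆
      (range (b / t)).image (fun m => b % t + t * m) by
    exact (card_le_card h).trans (card_image_le.trans (card_range _).le)
  intro x hx
  obtain ⟨hxB, hxb⟩ := mem_filter.mp hx
  have hxdiv := Nat.mod_add_div x t
  refine mem_image.mpr ⟨x / t, mem_range.mpr ?_, by rw [← hxb, Nat.mod_add_div]⟩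
  by_contra hge
  have hmul : t * (b / t) ≤ t * (x / t) := Nat.mul_le_mul_left t (not_lt.mp hge)
  have := hB.sub_mul_mem hxB (x / t - b / t) (by rw [Nat.mul_sub]; omega)
  rw [Nat.mul_sub, show x - (t * (x / t) - t * (b / t)) = b by omega] at this
  exact hb this

lemma IsClosedUnderSub.mem_iff_div_lt_residueCount (ht : 0 < t) {B : Finset ℕ}
    (hB : IsClosedUnderSub t B) (b : ℕ) : b ∈ B ↔ b / t < residueCount t B (b % t) :=
  ⟨hB.div_lt_residueCount ht,
    fun hlt => by_contra fun hb => (hB.residueCount_le_div hb).not_gt hlt⟩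

lemma mem_residuePrefixes {f : Fin t → ℕ} {b : ℕ} :
    b ∈ residuePrefixes t f ↔ ∃ i : Fin t, (i : ℕ) = b % t ∧ b / t < f i := by
  simp only [residuePrefixes, mem_biUnion, mem_univ, true_and, mem_image, mem_range]
  constructor
  · rintro ⟨i, m, hm, rfl⟩
    exact ⟨i, (add_mul_mod_of_lt i.isLt m).symm, by rwa [add_mul_div_of_lt i.isLt]⟩
  · rintro ⟨i, hi, hb⟩
    exact ⟨i, b / t, hb, by rw [hi, Nat.mod_add_div]⟩

lemma isClosedUnderSub_residuePrefixes (f : Fin t → ℕ) :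
    IsClosedUnderSub t (residuePrefixes t f) := by
  simp only [IsClosedUnderSub, residuePrefixes, mem_biUnion, mem_univ, true_and, mem_image,
    mem_range]
  rintro _ ⟨i, m, hm, rfl⟩ hle
  have hm0 : m ≠ 0 := by
    rintro rfl
    have := i.isLt
    omega
  have : t ≤ t * m := Nat.le_mul_of_pos_right t (Nat.pos_of_ne_zero hm0)
  exact ⟨i, m - 1, by omega, by rw [Nat.mul_sub_one]; omega⟩

lemma residuePrefixes_subset_range {n : ℕ} {f : Fin t → ℕ} (hf : ∀ i, f i ≤ n) :
    residuePrefixes t f ⊆ range (t * n) := by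
  simp only [residuePrefixes, biUnion_subset, image_subset_iff, mem_range]
  intro i _ m hm
  have := Nat.mul_le_mul_left t (Nat.succ_le_of_lt (hm.trans_le (hf i)))
  rw [Nat.mul_succ] at this
  omega

lemma residueCount_residuePrefixes (f : Fin t → ℕ) (i : Fin t) :
    residueCount t (residuePrefixes t f) i = f i := by
  have hfilter : (residuePrefixes t f).filter (fun b => b % t = i) =
      (range (f i)).image fun m => i + t * m := by
    ext b
    simp only [mem_filter, mem_residuePrefixes, mem_image, mem_range]
    constructor
    · rintro ⟨⟨j, hj, hb⟩, hbi⟩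
      obtain rfl : j = i := Fin.ext (hj.trans hbi)
      exact ⟨b / t, hb, by rw [← hbi, Nat.mod_add_div]⟩
    · rintro ⟨m, hm, rfl⟩
      exact ⟨⟨i, (add_mul_mod_of_lt i.isLt m).symm, by rwa [add_mul_div_of_lt i.isLt]⟩,
        add_mul_mod_of_lt i.isLt m⟩
  rw [residueCount, hfilter,
    card_image_of_injective _ (injective_add_mul i.pos _),
    card_range]

lemma sum_residueCount (ht : 0 < t) (B : Finset ℕ) : ∑ i : Fin t, residueCount t B i = #B := by
  rw [Fin.sum_univ_eq_sum_range (residueCount t B),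
    card_eq_sum_card_fiberwise (f := (· % t)) (t := range t)
      (fun b _ => mem_coe.mpr (mem_range.mpr (Nat.mod_lt b ht)))]
  rfl

lemma residueCount_le {n : ℕ} {B : Finset ℕ} (hB : B ⊆ range (t * n)) (i : ℕ) :
    residueCount t B i ≤ n := by
  have hsub : B.filter (fun b => b % t = i) ⊆ (range n).image fun m => i + t * m := by
    intro b hb
    obtain ⟨hbB, hbi⟩ := mem_filter.mp hb
    have hlt := mem_range.mp (hB hbB)
    refine mem_image.mpr ⟨b / t, mem_range.mpr ?_, by rw [← hbi, Nat.mod_add_div]⟩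
    exact Nat.div_lt_of_lt_mul hlt
  exact (card_le_card hsub).trans (card_image_le.trans (card_range n).le)

lemma IsClosedUnderSub.residuePrefixes_residueCount (ht : 0 < t) {B : Finset ℕ}
    (hB : IsClosedUnderSub t B) : residuePrefixes t (fun i => residueCount t B i) = B := by
  ext b
  rw [mem_residuePrefixes, hB.mem_iff_div_lt_residueCount ht]
  constructor
  · rintro ⟨i, hi, hb⟩
    rwa [← hi]
  · exact fun hb => ⟨⟨b % t, Nat.mod_lt b ht⟩, rfl, hb⟩

theorem card_closedUnderSub_eq_card_bounded_compositions (ht : 0 < t) (n r : ℕ) :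
    #{B ∈ powersetCard r (range (t * n)) | IsClosedUnderSub t B} =
      #{f ∈ Fintype.piFinset fun _ : Fin t => range (n + 1) | ∑ i, f i = r} := by
  refine card_nbij' (fun B i => residueCount t B i) (residuePrefixes t) ?_ ?_ ?_ ?_
  · intro B hB
    simp only [coe_filter, mem_powersetCard, Set.mem_ofPred_eq] at hB ⊢
    obtain ⟨⟨hsub, hcard⟩, -⟩ := hB
    refine ⟨Fintype.mem_piFinset.mpr fun i => mem_range.mpr ?_, ?_⟩
    · exact Nat.lt_succ_of_le (residueCount_le hsub i)
    · rw [sum_residueCount ht, hcard]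
  · intro f hf
    simp only [coe_filter, mem_powersetCard, Fintype.mem_piFinset, mem_range,
      Set.mem_ofPred_eq] at hf ⊢
    refine ⟨⟨residuePrefixes_subset_range fun i => Nat.le_of_lt_succ (hf.1 i), ?_⟩,
      isClosedUnderSub_residuePrefixes f⟩
    rw [← sum_residueCount ht]
    simp only [residueCount_residuePrefixes, hf.2]
  · intro B hB
    exact (mem_filter.mp hB).2.residuePrefixes_residueCount ht
  · intro f _
    exact funext (residueCount_residuePrefixes f)

end Residues

open Polynomial in
theorem coeff_geomSum_pow_eq_card {R : Type*} [CommSemiring R] (n t r : ℕ) :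
    ((∑ j ∈ range (n + 1), (X : R[X]) ^ j) ^ t).coeff r =
      #{f ∈ Fintype.piFinset fun _ : Fin t => range (n + 1) | ∑ i, f i = r} := by
  rw [← Fin.prod_const, prod_univ_sum, finsetSum_coeff, card_filter, Nat.cast_sum]
  refine sum_congr rfl fun f _ => ?_
  rw [prod_pow_eq_pow_sum, coeff_X_pow]
  simp only [eq_comm, Nat.cast_ite, Nat.cast_one, Nat.cast_zero]

open PowerSeries in
theorem coe_geomSum_eq_one_sub_pow_mul_mk_one {R : Type*} [CommRing R] (n : ℕ) :
    ((∑ j ∈ range (n + 1), (Polynomial.X : Polynomial R) ^ j : Polynomial R) : R⟦X⟧) =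
      (1 - X ^ (n + 1)) * PowerSeries.mk 1 := by
  rw [← Polynomial.coeToPowerSeries.ringHom_apply, map_sum]
  simp only [map_pow, Polynomial.coeToPowerSeries.ringHom_apply, Polynomial.coe_X]
  rw [← geom_sum_mul_neg, mul_assoc, mul_comm (1 - X), mk_one_mul_one_sub_eq_one, mul_one]

open PowerSeries in
theorem coeff_geomSum_pow_eq_sum_choose {R : Type*} [CommRing R] (n t r : ℕ) (ht : 0 < t) :
    ((∑ j ∈ range (n + 1), (Polynomial.X : Polynomial R) ^ j) ^ t).coeff r =
      ∑ j ∈ range (r / (n + 1) + 1),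
        (-1 : R) ^ j * (t.choose j : R) * ((r - (n + 1) * j + t - 1).choose (t - 1) : R) := by
  obtain ⟨d, rfl⟩ : ∃ d, t = d + 1 := ⟨t - 1, by omega⟩
  have hbinom : (1 - (X : R⟦X⟧) ^ (n + 1)) ^ (d + 1) =
      ∑ j ∈ range (d + 2), C ((-1 : R) ^ j * (d + 1).choose j) * X ^ ((n + 1) * j) := by
    rw [sub_eq_neg_add, add_pow]
    refine sum_congr rfl fun j _ => ?_
    rw [one_pow, mul_one, neg_pow, ← pow_mul, map_mul, map_pow, map_neg, map_one, map_natCast]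
    ring
  rw [← Polynomial.coeff_coe, Polynomial.coe_pow, coe_geomSum_eq_one_sub_pow_mul_mk_one, mul_pow,
    mk_one_pow_eq_mk_choose_add, hbinom, sum_mul, map_sum]
  simp only [mul_assoc, coeff_C_mul, coeff_X_pow_mul', coeff_mk, mul_ite, mul_zero, ← sum_filter]
  -- Terms with `r < (n + 1) * j` are cut off by the `if`, terms with `t < j` vanish as `t.choose j`.
  refine sum_subset_zero_on_sdiff (fun j hj => ?_) (fun j hj => ?_) (fun j hj => ?_)
  · rw [mem_filter, mem_range] at hj
    rw [mem_range, Nat.lt_succ_iff, Nat.le_div_iff_mul_le (Nat.succ_pos n), mul_comm]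
    exact hj.2
  · simp only [mem_sdiff, mem_filter, mem_range, Nat.lt_succ_iff, not_and, not_le] at hj
    have hjr : (n + 1) * j ≤ r :=
      (Nat.mul_le_mul_left _ hj.1).trans (Nat.mul_div_le r (n + 1))
    have hdj : d + 1 < j := by
      by_contra! h
      exact (hj.2 (by omega)).not_ge hjr
    rw [Nat.choose_eq_zero_of_lt hdj, Nat.cast_zero, zero_mul, mul_zero]
  · have hjr := (mem_filter.mp hj).2
    rw [show r - (n + 1) * j + (d + 1) - 1 = d + (r - (n + 1) * j) by omega, Nat.add_sub_cancel]

theorem coeff_eq_alternating_sum_general (r s t : ℕ) (ht : 2 ≤ t)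
    (hrt : t ∣ r) (hst : t ∣ s) :
    ((∑ j ∈ Finset.range ((r + s) / t + 1), (Polynomial.X : Polynomial ℤ) ^ j) ^ t).coeff r =
        (∑ j ∈ Finset.range (r / ((r + s) / t + 1) + 1),
          (-1 : ℤ) ^ j * (t.choose j : ℤ) *
            (((r - ((r + s) / t + 1) * j + t - 1).choose (t - 1) : ℤ))) ∧
      ({lam : Fin r → ℕ | IsRectPartition r s lam ∧ IsTCore r t lam}.ncard : ℤ) =
        (∑ j ∈ Finset.range (r / ((r + s) / t + 1) + 1),
          (-1 : ℤ) ^ j * (t.choose j : ℤ) *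
            (((r - ((r + s) / t + 1) * j + t - 1).choose (t - 1) : ℤ))) := by
  have ht0 : 0 < t := by omega
  obtain ⟨n, hn⟩ := Nat.dvd_add hrt hst
  rw [hn, Nat.mul_div_cancel_left n ht0]
  have hcoeff := coeff_geomSum_pow_eq_sum_choose (R := ℤ) n t r ht0
  refine ⟨hcoeff, ?_⟩
  rw [ncard_rectPartition_tCore, hn, card_closedUnderSub_eq_card_bounded_compositions ht0,
    ← coeff_geomSum_pow_eq_card, hcoeff]

/-- For `t ∣ r`, `t ∣ s` and `n = (r+s)/t`, the coefficient of `x^r` in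
`(1 + x + ⋯ + x^n)^t` equals `Σ_{j=0}^{⌊r/(n+1)⌋} (−1)^j C(t,j) C(r−(n+1)j+t−1, t−1)`;
equivalently, the number of `t`-cores in `Par_{r,s}` equals this alternating sum. -/
theorem coeff_eq_alternating_sum (r s t : ℕ) (hr : 1 ≤ r) (hs : 1 ≤ s) (ht : 2 ≤ t)
    (hrt : t ∣ r) (hst : t ∣ s) :
    ((∑ j ∈ Finset.range ((r + s) / t + 1), (Polynomial.X : Polynomial ℤ) ^ j) ^ t).coeff r =
        (∑ j ∈ Finset.range (r / ((r + s) / t + 1) + 1),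
          (-1 : ℤ) ^ j * (t.choose j : ℤ) *
            (((r - ((r + s) / t + 1) * j + t - 1).choose (t - 1) : ℤ))) ∧
      ({lam : Fin r → ℕ | IsRectPartition r s lam ∧ IsTCore r t lam}.ncard : ℤ) =
        (∑ j ∈ Finset.range (r / ((r + s) / t + 1) + 1),
          (-1 : ℤ) ^ j * (t.choose j : ℤ) *
            (((r - ((r + s) / t + 1) * j + t - 1).choose (t - 1) : ℤ))) :=
  coeff_eq_alternating_sum_general r s t ht hrt hst
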